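/- Let T = [a,b] ⊂ ℝ and let c : T → ℝ (representing t ↦ g_t(x̄)) be continuous, injective with uniformly continuous inverse, and suppose there exists t ∈ T with c(t) = 0. Define 𝒯(ε) := {t ∈ [a,b] | c(t) ≥ −ε} for ε > 0. Then for every ε > 0 and every sequence ε_n → ε with ε_n > 0, and for every δ > 0, there exists n₀ such that for all n ≥ n₀, 𝒯(ε_n) ⊆ 𝒯(ε) + B(0, δ). -/
import Mathlib


open Filter Topology Set

theorem epsActive_usc_excess (a b : ℝ) (hab : a ≤ b) (c : ℝ → ℝ)
    (hc : ContinuousOn c (Set.Icc a b))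
    (hinj : Set.InjOn c (Set.Icc a b))
    (hucinv : ∀ δ > (0:ℝ), ∃ η > (0:ℝ), ∀ s ∈ Set.Icc a b, ∀ u ∈ Set.Icc a b,
      |c s - c u| < η → |s - u| < δ)
    (hzero : ∃ t ∈ Set.Icc a b, c t = 0)
    (ε : ℝ) (hε : 0 < ε) (εseq : ℕ → ℝ) (hpos : ∀ n, 0 < εseq n)
    (htend : Tendsto εseq atTop (nhds ε)) (δ : ℝ) (hδ : 0 < δ) :
    ∃ n₀ : ℕ, ∀ n ≥ n₀, ∀ t ∈ {t ∈ Set.Icc a b | c t ≥ -(εseq n)},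
      ∃ s ∈ {t ∈ Set.Icc a b | c t ≥ -ε}, |t - s| < δ := by
  obtain ⟨η, hη, hkey⟩ := hucinv δ hδ
  obtain ⟨t₀, ht₀, hct₀⟩ := hzero
  have hev : ∀ᶠ n in atTop, εseq n < ε + η := by
    have := htend (Iio_mem_nhds (show ε < ε + η by linarith))
    simpa using this
  obtain ⟨n₀, hn₀⟩ := hev.exists_forall_of_atTop
  refine ⟨n₀, fun n hn t ht => ?_⟩
  obtain ⟨htab, hct⟩ := ht
  by_cases hcase : c t ≥ -ε
  · exact ⟨t, ⟨htab, hcase⟩, by simpa using hδ⟩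
  · push_neg at hcase
    have huIcc : Set.uIcc t t₀ ⊆ Set.Icc a b := Set.uIcc_subset_Icc htab ht₀
    have hiv : -ε ∈ c '' Set.uIcc t t₀ := by
      apply intermediate_value_uIcc (hc.mono huIcc)
      rw [Set.mem_uIcc]
      left
      constructor
      · linarith
      · rw [hct₀]; linarith
    obtain ⟨s, hs, hcs⟩ := hiv
    have hsab : s ∈ Set.Icc a b := huIcc hs
    have hlt : |c t - c s| < η := by
      rw [hcs, abs_of_nonpos (by linarith)]
      have := hn₀ n hn
      linarith
    exact ⟨s, ⟨hsab, by rw [hcs]⟩, hkey t htab s hsab hlt⟩
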